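/- Fix an integer p ≥ 1 and let w ∈ X^ℕ. If w is cofinal to j^∞ for some j ∈ {0,1,…,p}, then Orb(w) = Cof(0^∞) ∪ Cof(1^∞) ∪ … ∪ Cof(p^∞). Otherwise, Orb(w) = Cof(w). -/
import Mathlib


/-- The action of the generator `e_i` of the star automaton group `𝒢_{S_p}` on the
boundary of the rooted `(p+1)`-ary tree, i.e. on infinite words over `X = {0,…,p}`:
`E_i(0^∞) = i^∞`; `E_i(0^k i u) = i^k 0 u`; `E_i(0^k j u) = i^k j u` for `j ∉ {0, i}`. -/
noncomputable def Ebd (p : ℕ) (i : Fin (p + 1)) (w : ℕ → Fin (p + 1)) : ℕ → Fin (p + 1) := by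
  classical
  exact
    if h : ∃ k, w k ≠ 0 then
      if w (Nat.find h) = i then
        fun m => if m < Nat.find h then i else if m = Nat.find h then 0 else w m
      else fun m => if m < Nat.find h then i else w m
    else fun _ => i

/-- One step of the action of the generators `E_1, …, E_p` (or their inverses). -/
def StarStep (p : ℕ) (u v : ℕ → Fin (p + 1)) : Prop :=
  ∃ i : Fin p, Ebd p i.succ u = v ∨ Ebd p i.succ v = u

/-- The orbit `Orb(w)` of `w` under the group generated by `E_1, …, E_p`. -/
def StarOrbit (p : ℕ) (w : ℕ → Fin (p + 1)) : Set (ℕ → Fin (p + 1)) :=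
  {v | Relation.ReflTransGen (StarStep p) w v}

/-- Two infinite words are cofinal if they differ in only finitely many positions. -/
def Cofinal {p : ℕ} (u v : ℕ → Fin (p + 1)) : Prop :=
  {j : ℕ | u j ≠ v j}.Finite

section Aux
variable {p : ℕ}

private lemma cof_refl (u : ℕ → Fin (p+1)) : Cofinal u u := by simp [Cofinal]

private lemma cof_symm {u v : ℕ → Fin (p+1)} (h : Cofinal u v) : Cofinal v u := by
  apply Set.Finite.subset h
  intro j hj
  simp only [Set.mem_setOf_eq] at *
  exact fun he => hj he.symm

private lemma cof_trans {u v w : ℕ → Fin (p+1)} (h1 : Cofinal u v) (h2 : Cofinal v w) :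
    Cofinal u w := by
  apply Set.Finite.subset (h1.union h2)
  intro j hj
  simp only [Set.mem_setOf_eq, Set.mem_union] at *
  by_contra hc
  push_neg at hc
  exact hj (hc.1.trans hc.2)

private lemma zero_words {w : ℕ → Fin (p+1)} (h : ¬ ∃ k, w k ≠ 0) : w = fun _ => 0 := by
  push_neg at h; funext k; exact h k

private lemma ebd_zero (i : Fin (p+1)) : Ebd p i (fun _ => 0) = fun _ => i := by
  unfold Ebd
  rw [dif_neg (by push_neg; intro k; rfl)]

private lemma find_eq {w : ℕ → Fin (p+1)} (hex : ∃ k, w k ≠ 0) {n : ℕ}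
    (h0 : ∀ m, m < n → w m = 0) (hn : w n ≠ 0) :
    ∀ (inst : DecidablePred fun k => w k ≠ 0), @Nat.find _ inst hex = n := by
  intro inst
  rw [Nat.find_eq_iff]
  exact ⟨hn, fun m hm hne => hne (h0 m hm)⟩

private lemma ebd_swap {i : Fin (p+1)} {w : ℕ → Fin (p+1)} {n : ℕ}
    (h0 : ∀ m, m < n → w m = 0) (hn : w n = i) (hi : i ≠ 0) :
    Ebd p i w = fun m => if m < n then i else if m = n then 0 else w m := by
  have hne : w n ≠ 0 := hn ▸ hi
  have hex : ∃ k, w k ≠ 0 := ⟨n, hne⟩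
  unfold Ebd
  simp only [dif_pos hex]
  rw [find_eq hex h0 hne, if_pos hn]

private lemma ebd_keep {i : Fin (p+1)} {w : ℕ → Fin (p+1)} {n : ℕ}
    (h0 : ∀ m, m < n → w m = 0) (hn : w n ≠ 0) (hni : w n ≠ i) :
    Ebd p i w = fun m => if m < n then i else w m := by
  have hex : ∃ k, w k ≠ 0 := ⟨n, hn⟩
  unfold Ebd
  simp only [dif_pos hex]
  rw [find_eq hex h0 hn, if_neg hni]

private lemma ebd_cofinal (i : Fin (p+1)) {w : ℕ → Fin (p+1)} (hex : ∃ k, w k ≠ 0) :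
    Cofinal (Ebd p i w) w := by
  classical
  obtain ⟨n, hn, h0⟩ : ∃ n, w n ≠ 0 ∧ ∀ m, m < n → w m = 0 :=
    ⟨Nat.find hex, Nat.find_spec hex, fun m hm => by
      by_contra hc; exact Nat.find_min hex hm hc⟩
  have hsub : {j | Ebd p i w j ≠ w j} ⊆ Set.Iic n := by
    intro j hj
    simp only [Set.mem_setOf_eq] at hj
    by_contra hgt
    simp only [Set.mem_Iic, not_le] at hgt
    apply hj
    by_cases hwi : w n = i
    · simp only [ebd_swap h0 hwi (hwi ▸ hn)]
      rw [if_neg (by omega), if_neg (by omega)]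
    · simp only [ebd_keep h0 hn hwi]
      rw [if_neg (by omega)]
  exact (Set.finite_Iic n).subset hsub

private lemma conn_symm {u v : ℕ → Fin (p+1)}
    (h : Relation.ReflTransGen (StarStep p) u v) :
    Relation.ReflTransGen (StarStep p) v u := by
  induction h with
  | refl => exact .refl
  | tail _ hstep ih =>
      refine Relation.ReflTransGen.trans (Relation.ReflTransGen.single ?_) ih
      obtain ⟨i, hi⟩ := hstep
      exact ⟨i, hi.symm⟩

private lemma step_swap (i : Fin p) {w : ℕ → Fin (p+1)} {n : ℕ}
    (h0 : ∀ m, m < n → w m = 0) (hn : w n = i.succ) :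
    StarStep p w (fun m => if m < n then i.succ else if m = n then (0:Fin (p+1)) else w m) :=
  ⟨i, Or.inl (ebd_swap h0 hn (Fin.succ_ne_zero i))⟩

private lemma conn_update : ∀ (n : ℕ) (w : ℕ → Fin (p+1)) (x : Fin (p+1)),
    Relation.ReflTransGen (StarStep p) w (Function.update w n x) := by
  intro n
  induction n using Nat.strong_induction_on with
  | _ n IH =>
    have zp : ∀ k, k ≤ n → ∀ w : ℕ → Fin (p+1),
        Relation.ReflTransGen (StarStep p) w (fun m => if m < k then 0 else w m) := by
      intro k
      induction k with
      | zero =>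
        intro _ w
        have h : (fun m => if m < 0 then (0:Fin (p+1)) else w m) = w := by
          funext m; simp
        rw [h]
      | succ k ih =>
        intro hk w
        have h1 := IH k (by omega) w (0:Fin (p+1))
        have h2 := ih (by omega) (Function.update w k 0)
        have heq : (fun m => if m < k then (0:Fin (p+1)) else Function.update w k 0 m)
            = fun m => if m < k+1 then 0 else w m := by
          funext m
          rcases lt_trichotomy m k with h|h|h
          · simp [h, Nat.lt_succ_of_lt h]
          · subst h; simp [Function.update]
          · rw [if_neg (by omega : ¬ m < k), Function.update_of_ne (by omega : m ≠ k),
              if_neg (by omega : ¬ m < k + 1)]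
        exact h1.trans (heq ▸ h2)
    have core : ∀ (w : ℕ → Fin (p+1)) (i : Fin p), (∀ m, m < n → w m = 0) →
        w n = i.succ → Relation.ReflTransGen (StarStep p) w (Function.update w n 0) := by
      intro w i h0 hn
      have c1 := Relation.ReflTransGen.single (step_swap (p := p) i h0 hn)
      refine c1.trans ?_
      have c2 := zp n le_rfl
        (fun m => if m < n then i.succ else if m = n then (0:Fin (p+1)) else w m)
      have heq : (fun m => if m < n then (0:Fin (p+1)) else
          (fun m => if m < n then i.succ else if m = n then (0:Fin (p+1)) else w m) m)
          = Function.update w n 0 := by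
        funext m
        rcases lt_trichotomy m n with h|h|h
        · simp [h, Function.update, (by omega : m ≠ n), h0 m h]
        · subst h; simp [Function.update]
        · simp [Nat.lt_asymm h, (by omega : ¬ m < n), (by omega : m ≠ n), Function.update]
      exact heq ▸ c2
    intro w x
    have chz : ∀ (w : ℕ → Fin (p+1)) (x : Fin (p+1)), (∀ m, m < n → w m = 0) →
        Relation.ReflTransGen (StarStep p) w (Function.update w n x) := by
      intro w x h0
      have core2 : ∀ (w : ℕ → Fin (p+1)), (∀ m, m < n → w m = 0) → w n = 0 →
          Relation.ReflTransGen (StarStep p) w (Function.update w n x) := by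
        intro w h0 hn0
        rcases Fin.eq_zero_or_eq_succ x with hx | ⟨i, hx⟩
        · subst hx
          have h : Function.update w n 0 = w := by
            rw [← hn0]; exact Function.update_eq_self n w
          rw [h]
        · subst hx
          have h0' : ∀ m, m < n → Function.update w n i.succ m = 0 := by
            intro m hm
            rw [Function.update_of_ne (by omega)]
            exact h0 m hm
          have hn' : Function.update w n i.succ n = i.succ := Function.update_self n _ w
          have hc := core (Function.update w n i.succ) i h0' hn'
          have heq : Function.update (Function.update w n i.succ) n 0 = w := by
            rw [Function.update_idem, ← hn0, Function.update_eq_self]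
          rw [heq] at hc
          exact conn_symm hc
      rcases Fin.eq_zero_or_eq_succ (w n) with hn0 | ⟨i, hni⟩
      · exact core2 w h0 hn0
      · have c1 := core w i h0 hni
        have h0' : ∀ m, m < n → Function.update w n 0 m = 0 := fun m hm => by
          rw [Function.update_of_ne (by omega)]; exact h0 m hm
        have c2 := core2 (Function.update w n 0) h0' (Function.update_self n 0 w)
        rw [Function.update_idem] at c2
        exact c1.trans c2
    have c1 := zp n le_rfl w
    have h00 : ∀ m, m < n → (fun m => if m < n then (0:Fin (p+1)) else w m) m = 0 := by
      intro m hm; simp [hm]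
    have c2 := chz (fun m => if m < n then (0:Fin (p+1)) else w m) x h00
    have c3 := zp n le_rfl (Function.update w n x)
    have heq : (fun m => if m < n then (0:Fin (p+1)) else Function.update w n x m)
        = Function.update (fun m => if m < n then (0:Fin (p+1)) else w m) n x := by
      funext m
      rcases lt_trichotomy m n with h|h|h
      · rw [if_pos h, Function.update_of_ne (by omega : m ≠ n), if_pos h]
      · subst h; simp [Function.update]
      · rw [if_neg (by omega : ¬ m < n), Function.update_of_ne (by omega : m ≠ n),
          Function.update_of_ne (by omega : m ≠ n), if_neg (by omega : ¬ m < n)]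
    exact c1.trans (c2.trans (conn_symm (heq ▸ c3)))

private lemma conn_of_agree : ∀ (N : ℕ) (u v : ℕ → Fin (p+1)),
    (∀ m, N ≤ m → u m = v m) → Relation.ReflTransGen (StarStep p) u v := by
  intro N
  induction N with
  | zero =>
    intro u v h
    have : u = v := funext fun m => h m (Nat.zero_le m)
    rw [this]
  | succ N ih =>
    intro u v h
    have c1 := conn_update N u (v N)
    refine c1.trans (ih _ v ?_)
    intro m hm
    rcases eq_or_lt_of_le hm with h'|h'
    · subst h'
      rw [Function.update_self]
    · rw [Function.update_of_ne (by omega)]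
      exact h m (by omega)

private lemma conn_of_cofinal {u v : ℕ → Fin (p+1)} (h : Cofinal u v) :
    Relation.ReflTransGen (StarStep p) u v := by
  obtain ⟨b, hb⟩ := h.bddAbove
  apply conn_of_agree (b+1)
  intro m hm
  by_contra hne
  have h1 : m ∈ {j | u j ≠ v j} := hne
  have h2 := hb h1
  omega

private lemma conn_const_zero (j : Fin (p+1)) :
    Relation.ReflTransGen (StarStep p) (fun _ => (0:Fin (p+1))) (fun _ => j) := by
  rcases Fin.eq_zero_or_eq_succ j with h | ⟨i, h⟩
  · subst h; exact .refl
  · subst h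
    exact Relation.ReflTransGen.single ⟨i, Or.inl (ebd_zero i.succ)⟩

end Aux

/-- If `w` is cofinal to some constant word `j^∞`, then
`Orb(w) = Cof(0^∞) ∪ … ∪ Cof(p^∞)`; otherwise `Orb(w) = Cof(w)`. -/
theorem stmt17 (p : ℕ) (hp : 1 ≤ p) (w : ℕ → Fin (p + 1)) :
    ((∃ j : Fin (p + 1), Cofinal w (fun _ => j)) →
      StarOrbit p w = ⋃ j : Fin (p + 1), {v : ℕ → Fin (p + 1) | Cofinal v (fun _ => j)}) ∧
    (¬(∃ j : Fin (p + 1), Cofinal w (fun _ => j)) →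
      StarOrbit p w = {v : ℕ → Fin (p + 1) | Cofinal v w}) := by
  constructor
  · intro hj
    ext v
    simp only [Set.mem_iUnion, Set.mem_setOf_eq]
    constructor
    · intro hv
      have hv' : Relation.ReflTransGen (StarStep p) w v := hv
      clear hv
      induction hv' with
      | refl => exact hj
      | tail _ hstep ih =>
        rename_i b v' _
        obtain ⟨j, hbj⟩ := ih
        obtain ⟨i, h | h⟩ := hstep
        · by_cases hb : ∃ k, b k ≠ 0
          · exact ⟨j, cof_trans (h ▸ ebd_cofinal i.succ hb) hbj⟩
          · refine ⟨i.succ, ?_⟩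
            have : v' = fun _ => i.succ := by
              rw [← h, zero_words hb, ebd_zero]
            rw [this]
            exact cof_refl _
        · by_cases hv0 : ∃ k, v' k ≠ 0
          · exact ⟨j, cof_trans (cof_symm (h ▸ ebd_cofinal i.succ hv0)) hbj⟩
          · exact ⟨0, zero_words hv0 ▸ cof_refl _⟩
    · rintro ⟨j, hvj⟩
      obtain ⟨j0, hw⟩ := hj
      show Relation.ReflTransGen (StarStep p) w v
      exact (conn_of_cofinal hw).trans
        ((conn_symm (conn_const_zero j0)).trans
          ((conn_const_zero j).trans (conn_symm (conn_of_cofinal hvj))))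
  · intro hnc
    ext v
    simp only [Set.mem_setOf_eq]
    constructor
    · intro hv
      have hv' : Relation.ReflTransGen (StarStep p) w v := hv
      clear hv
      induction hv' with
      | refl => exact cof_refl w
      | tail _ hstep ih =>
        rename_i b v' _
        obtain ⟨i, h | h⟩ := hstep
        · by_cases hb : ∃ k, b k ≠ 0
          · exact cof_trans (h ▸ ebd_cofinal i.succ hb) ih
          · exact absurd ⟨(0:Fin (p+1)), cof_symm (zero_words hb ▸ ih)⟩ hnc
        · by_cases hv0 : ∃ k, v' k ≠ 0
          · exact cof_trans (cof_symm (h ▸ ebd_cofinal i.succ hv0)) ih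
          · have hbv : b = fun _ => i.succ := by
              rw [← h, zero_words hv0, ebd_zero]
            exact absurd ⟨i.succ, cof_symm (hbv ▸ ih)⟩ hnc
    · intro hv
      show Relation.ReflTransGen (StarStep p) w v
      exact conn_of_cofinal (cof_symm hv)
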